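/- arXiv:2212.07999 — 3 statements merged into one kernel-verified Lean document; each statement's English description precedes it below -/
import Mathlib

section
/- Let (a_n)_{n≥0} be a sequence of nonnegative real numbers such that Δ := limsup_{n→∞} a_n − a_0 is finite. Let (a_n^m)_{n≥0, m≥m_0} be a double sequence of nonnegative real numbers such that a_n^m ≤ a_n^{m+1} for all n ≥ 0 and m ≥ m_0, such that lim_{m→∞} a_n^m = a_n for every n ≥ 0, and such that liminf_{n→∞} a_n^m ≥ a_0^m for every m ≥ m_0. Then limsup_{m→∞} sup_{n≥0} |a_n − a_n^m| ≤ Δ (the supremum over n taken in [0,+∞]). -/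
open scoped ENNReal NNReal
open Filter Topology

/-!
For `m ≥ m₀` the monotone convergence `b m n ↑ a n` gives `b m n ≤ a n`, so only `a n - b m n`
has to be bounded. Given `ε`, choose `m₁` with `b m₁ 0 > a 0 - ε`. Along `n`, the liminf
hypothesis for `b m₁` keeps `b m₁ n` above `a 0 - ε` while the limsup hypothesis keeps `a n`
below `a 0 + Δ + ε`; so `a n - b m₁ n < Δ + 2ε` for all `n ≥ N`, and monotonicity in `m`
propagates this to every `m ≥ m₁`. The finitely many `n < N` are handled by pointwise
convergence.
-/

theorem Filter.eventually_forall_of_eventually_forall_ge {α : Type*} {l : Filter α}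
    {p : α → ℕ → Prop} (N : ℕ) (hfin : ∀ n < N, ∀ᶠ m in l, p m n)
    (htail : ∀ᶠ m in l, ∀ n ≥ N, p m n) : ∀ᶠ m in l, ∀ n, p m n := by
  have hinit : ∀ᶠ m in l, ∀ n ∈ Set.Iio N, p m n :=
    (eventually_all_finite (Set.finite_Iio N)).2 hfin
  filter_upwards [hinit, htail] with m hlt hge n
  exact (lt_or_ge n N).elim (hlt n) (hge n)

theorem MonotoneOn.le_of_tendsto_Ici {α : Type*} [Preorder α] [TopologicalSpace α]
    [ClosedIciTopology α] {f : ℕ → α} {k : ℕ} {x : α} (hf : MonotoneOn f (Set.Ici k))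
    (hx : Tendsto f atTop (𝓝 x)) {m : ℕ} (hm : k ≤ m) : f m ≤ x :=
  ge_of_tendsto hx <| eventually_atTop.2 ⟨m, fun _ hj => hf hm (hm.trans hj) hj⟩

namespace NNReal

variable {α : Type*} {l : Filter α} {f : α → ℝ≥0} {c δ : ℝ≥0}

theorem eventually_lt_add_of_limsup_le (h : limsup (fun i => (f i : ℝ≥0∞)) l ≤ c)
    (hδ : 0 < δ) : ∀ᶠ i in l, f i < c + δ := by
  have : limsup (fun i => (f i : ℝ≥0∞)) l < ↑(c + δ) :=
    h.trans_lt (by exact_mod_cast lt_add_of_pos_right c hδ)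
  filter_upwards [eventually_lt_of_limsup_lt this] with i hi
  exact_mod_cast hi

theorem eventually_lt_add_of_le_liminf [l.NeBot] {x : ℝ≥0}
    (h : (x : ℝ≥0∞) ≤ liminf (fun i => (f i : ℝ≥0∞)) l) (hc : c < x + δ) :
    ∀ᶠ i in l, c < f i + δ := by
  have : (c : ℝ≥0∞) < liminf (fun i => (f i + δ : ℝ≥0∞)) l := by
    rw [liminf_add_const l _ _ (by isBoundedDefault) (by isBoundedDefault)]
    exact (ENNReal.coe_lt_coe.2 hc).trans_le (by push_cast; gcongr)
  filter_upwards [eventually_lt_of_lt_liminf this] with i hi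
  exact_mod_cast hi

theorem ofReal_abs_sub_eq_coe_tsub {x y : ℝ≥0} (h : y ≤ x) :
    ENNReal.ofReal |(x : ℝ) - y| = ((x - y : ℝ≥0) : ℝ≥0∞) := by
  rw [abs_of_nonneg (sub_nonneg.2 (NNReal.coe_le_coe.2 h)), ← NNReal.coe_sub h,
    ENNReal.ofReal_coe_nnreal]

end NNReal

/-- Strengthened Dini lemma: if `(a n)` are nonnegative reals whose limsup exceeds `a 0`
by a finite amount `Δ ≥ 0`, and `(b m n)` is a double sequence of nonnegative reals,
nondecreasing in `m ≥ m₀`, converging to `a n` as `m → ∞` for every `n`, and satisfying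
`liminf_{n→∞} b m n ≥ b m 0` for every `m ≥ m₀`, then
`limsup_{m→∞} sup_{n} |a n − b m n| ≤ Δ` (the supremum over `n` taken in `[0,∞]`). -/
theorem strengthened_dini (m₀ : ℕ) (a : ℕ → ℝ≥0) (b : ℕ → ℕ → ℝ≥0) (Δ : ℝ≥0)
    (hΔ : Filter.limsup (fun n => (a n : ℝ≥0∞)) Filter.atTop = (a 0 : ℝ≥0∞) + Δ)
    (hmono : ∀ n : ℕ, ∀ m : ℕ, m₀ ≤ m → b m n ≤ b (m + 1) n)
    (hlim : ∀ n : ℕ, Filter.Tendsto (fun m => b m n) Filter.atTop (nhds (a n)))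
    (hliminf : ∀ m : ℕ, m₀ ≤ m →
      (b m 0 : ℝ≥0∞) ≤ Filter.liminf (fun n => (b m n : ℝ≥0∞)) Filter.atTop) :
    Filter.limsup
      (fun m => ⨆ n : ℕ, (ENNReal.ofReal |(a n : ℝ) - (b m n : ℝ)|)) Filter.atTop
      ≤ (Δ : ℝ≥0∞) := by
  have hb_mono n : MonotoneOn (b · n) (Set.Ici m₀) := monotoneOn_nat_Ici_of_le_succ (hmono n)
  refine ENNReal.le_of_forall_pos_le_add fun ε hε _ => ?_
  obtain ⟨m₁, ha₀, hm₁⟩ : ∃ m₁, a 0 < b m₁ 0 + ε / 2 ∧ m₀ ≤ m₁ :=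
    (((hlim 0).add_const _).eventually (lt_mem_nhds (lt_add_of_pos_right _ (half_pos hε)))).and
      (eventually_ge_atTop m₀) |>.exists
  obtain ⟨N, htail⟩ : ∃ N, ∀ n ≥ N, a n < b m₁ n + (Δ + ε) := eventually_atTop.1 <| by
    filter_upwards [NNReal.eventually_lt_add_of_limsup_le (c := a 0 + Δ)
      (by exact_mod_cast hΔ.le) (half_pos hε),
      NNReal.eventually_lt_add_of_le_liminf (hliminf m₁ hm₁) ha₀] with n han ha₀n
    calc a n < a 0 + Δ + ε / 2 := han
      _ ≤ b m₁ n + ε / 2 + Δ + ε / 2 := by gcongr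
      _ = b m₁ n + (Δ + ε) := by rw [← add_halves ε]; ring
  have hunif : ∀ᶠ m in atTop, ∀ n, a n < b m n + (Δ + ε) := by
    refine eventually_forall_of_eventually_forall_ge N (fun n _ => ?_) ?_
    · exact ((hlim n).add_const _).eventually
        (lt_mem_nhds (lt_add_of_pos_right _ (by positivity)))
    · filter_upwards [eventually_ge_atTop m₁] with m hm n hn
      exact (htail n hn).trans_le (by gcongr; exact hb_mono n hm₁ (hm₁.trans hm) hm)
  refine limsup_le_of_le (by isBoundedDefault) ?_
  filter_upwards [hunif, eventually_ge_atTop m₀] with m hm hm₀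
  refine iSup_le fun n => ?_
  rw [NNReal.ofReal_abs_sub_eq_coe_tsub ((hb_mono n).le_of_tendsto_Ici (hlim n) hm₀)]
  exact_mod_cast tsub_le_iff_left.2 (hm n).le
end

section
/- Let ρ, σ, ω, ϑ be positive semidefinite complex matrices of the same finite size satisfying ρσ = 0, ρϑ = 0, σω = 0 and ωϑ = 0. Then D(ρ+σ‖ω+ϑ) = D(ρ‖ω) + D(σ‖ϑ), with equality in [0,+∞]. -/
open scoped ENNReal ComplexOrder

/-- `Log X`: functional calculus of the real logarithm (with `log 0 = 0`)
applied to a Hermitian (in particular, positive semidefinite) matrix `X`;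
defined as `0` on non-Hermitian matrices. -/
noncomputable def matLog {n : Type*} [Fintype n] [DecidableEq n]
    (X : Matrix n n ℂ) : Matrix n n ℂ :=
  if hX : X.IsHermitian then hX.cfc Real.log else 0

/-- Lindblad's extended quantum relative entropy `D(ρ‖σ)`, with values in `[0,+∞]`:
`D(ρ‖σ) = Tr(ρ·Log ρ) − Tr(ρ·Log σ) + Tr σ − Tr ρ` if `ran ρ ⊆ ran σ`, and `+∞` otherwise. -/
noncomputable def relEnt {n : Type*} [Fintype n] [DecidableEq n]
    (ρ σ : Matrix n n ℂ) : ℝ≥0∞ :=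
  open Classical in
  if LinearMap.range ρ.mulVecLin ≤ LinearMap.range σ.mulVecLin then
    ENNReal.ofReal ((ρ * matLog ρ).trace.re - (ρ * matLog σ).trace.re
      + σ.trace.re - ρ.trace.re)
  else ∞

/-!
Orthogonality makes every ingredient of `D` split. Since `ρσ = 0`, `Log (ρ + σ) = Log ρ + Log σ`:
on the finite spectra the logarithm agrees with a polynomial without constant term, and such
polynomials are additive on orthogonal pairs. The cross terms `ρ · Log ϑ` and `σ · Log ω` vanish
because `Log ϑ = ϑ · h(ϑ)` for `h x = log x / x`, and the support condition
`ran (ρ + σ) ⊆ ran (ω + ϑ)` splits into `ran ρ ⊆ ran ω` and `ran σ ⊆ ran ϑ`.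
Finally `ofReal` is additive on the two finite values because both are nonnegative (Klein's
inequality): in the eigenbases `(uᵢ)` of `ρ` and `(vⱼ)` of `ω`, the trace expression becomes
`∑ᵢⱼ |⟨uᵢ, vⱼ⟩|² (pᵢ log pᵢ - pᵢ log qⱼ - pᵢ + qⱼ)`, whose terms are nonnegative by
`log x ≥ 1 - 1/x`, except where `qⱼ = 0`; there the support condition forces
`|⟨uᵢ, vⱼ⟩|² pᵢ = 0`.
-/

theorem add_pow_succ_of_mul_eq_zero {R : Type*} [Semiring R] {a b : R} (hab : a * b = 0)
    (hba : b * a = 0) (k : ℕ) : (a + b) ^ (k + 1) = a ^ (k + 1) + b ^ (k + 1) := by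
  induction k with
  | zero => simp
  | succ k ih =>
    have hab' : a ^ (k + 1) * b = 0 := by rw [pow_succ, mul_assoc, hab, mul_zero]
    have hba' : b ^ (k + 1) * a = 0 := by rw [pow_succ, mul_assoc, hba, mul_zero]
    rw [pow_succ, ih, add_mul, mul_add, mul_add, hab', hba', add_zero, zero_add,
      ← pow_succ, ← pow_succ]

open Polynomial in
theorem Polynomial.aeval_add_of_mul_eq_zero {R A : Type*} [CommSemiring R] [Semiring A]
    [Algebra R A] {a b : A} (hab : a * b = 0) (hba : b * a = 0) {p : R[X]}
    (hp : p.coeff 0 = 0) : aeval (a + b) p = aeval a p + aeval b p := by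
  simp only [aeval_eq_sum_range, Finset.sum_range_succ', hp, zero_smul, add_zero,
    add_pow_succ_of_mul_eq_zero hab hba, smul_add, Finset.sum_add_distrib]

open Polynomial in
theorem Set.Finite.exists_polynomial_eval_eqOn {F : Type*} [Field F] {s : Set F}
    (hs : s.Finite) (f : F → F) : ∃ p : F[X], s.EqOn (fun x => p.eval x) f := by
  classical
  exact ⟨Lagrange.interpolate hs.toFinset id f, fun x hx =>
    Lagrange.eval_interpolate_at_node f (Set.injOn_id _) (hs.mem_toFinset.2 hx)⟩

theorem Matrix.range_mulVecLin_le_iff {R m n k : Type*} [CommSemiring R] [Fintype n]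
    [DecidableEq n] [Fintype k] {A : Matrix m n R} {B : Matrix m k R} :
    LinearMap.range A.mulVecLin ≤ LinearMap.range B.mulVecLin ↔
      ∃ M : Matrix k n R, A = B * M := by
  refine ⟨fun h => ?_, ?_⟩
  · choose y hy using fun j => h ⟨Pi.single j 1, rfl⟩
    refine ⟨(Matrix.of y).transpose, Matrix.ext_of_mulVec_single fun j => ?_⟩
    rw [← Matrix.mulVecLin_apply, ← hy j, Matrix.mulVecLin_apply, ← Matrix.mulVec_mulVec,
      Matrix.mulVec_single_one]
    rfl
  · rintro ⟨M, rfl⟩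
    rw [Matrix.mulVecLin_mul]
    exact LinearMap.range_comp_le_range _ _

theorem Real.sub_le_mul_log_sub_mul_log {p q : ℝ} (hp : 0 ≤ p) (hq : 0 < q) :
    p - q ≤ p * Real.log p - p * Real.log q := by
  rcases hp.eq_or_lt with rfl | hp
  · simpa using hq.le
  have h := Real.one_sub_inv_le_log_of_pos (div_pos hp hq)
  rw [inv_div, Real.log_div hp.ne' hq.ne'] at h
  have := mul_le_mul_of_nonneg_left h hp.le
  rwa [mul_sub, mul_one, mul_div_cancel₀ _ hp.ne', mul_sub] at this

namespace Matrix

variable {𝕜 n : Type*} [RCLike 𝕜] [Fintype n] {A B C : Matrix n n 𝕜}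

theorem IsHermitian.mul_eq_zero_comm (hA : A.IsHermitian) (hB : B.IsHermitian) :
    A * B = 0 ↔ B * A = 0 := by
  rw [← conjTranspose_eq_zero, conjTranspose_mul, hA.eq, hB.eq]

variable [DecidableEq n]

theorem continuousOn_spectrum_real (f : ℝ → ℝ) (A : Matrix n n 𝕜) :
    ContinuousOn f (spectrum ℝ A) :=
  A.finite_real_spectrum.continuousOn f

namespace IsHermitian

open Polynomial in
theorem cfc_add_of_mul_eq_zero (hA : A.IsHermitian) (hB : B.IsHermitian) (hAB : A * B = 0)
    {f : ℝ → ℝ} (hf : f 0 = 0) : cfc f (A + B) = cfc f A + cfc f B := by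
  obtain ⟨p, hp⟩ := (((Set.finite_singleton (0 : ℝ)).union A.finite_real_spectrum).union
    (B.finite_real_spectrum.union (A + B).finite_real_spectrum)).exists_polynomial_eval_eqOn f
  have hcfc : ∀ C : Matrix n n 𝕜, C.IsHermitian → spectrum ℝ C ⊆ _ → cfc f C = aeval C p :=
    fun C hC hCs => (cfc_congr (hp.mono hCs).symm).trans (cfc_polynomial p C hC)
  have hp0 : p.coeff 0 = 0 := by
    rw [coeff_zero_eq_eval_zero]
    exact (hp (by simp : (0 : ℝ) ∈ _)).trans hf
  rw [hcfc A hA (by grind), hcfc B hB (by grind), hcfc (A + B) (hA.add hB) (by grind),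
    aeval_add_of_mul_eq_zero hAB ((hA.mul_eq_zero_comm hB).1 hAB) hp0]

theorem mul_cfc_eq_zero_of_mul_eq_zero (hB : B.IsHermitian) (hAB : A * B = 0) {f : ℝ → ℝ}
    (hf : f 0 = 0) : A * cfc f B = 0 := by
  have hfactor : cfc f B = B * cfc (fun x => f x / x) B := by
    calc cfc f B = cfc (fun x => x * (f x / x)) B := cfc_congr fun x _ => by
            rcases eq_or_ne x 0 with rfl | hx
            · simp [hf]
            · field_simp
      _ = B * cfc (fun x => f x / x) B := by
            rw [cfc_mul _ _ B (continuousOn_spectrum_real _ B) (continuousOn_spectrum_real _ B),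
              cfc_id' ℝ B]
  rw [hfactor, ← mul_assoc, hAB, zero_mul]

theorem range_mulVecLin_le_add (hA : A.IsHermitian) (hB : B.IsHermitian) (hAB : A * B = 0) :
    LinearMap.range A.mulVecLin ≤ LinearMap.range (A + B).mulVecLin := by
  have hcube : A * A * cfc (fun x : ℝ => x⁻¹) A = A := by
    calc A * A * cfc (fun x : ℝ => x⁻¹) A = cfc (fun x : ℝ => x * x * x⁻¹) A := by
          rw [cfc_mul _ _ A (continuousOn_spectrum_real _ A) (continuousOn_spectrum_real _ A),
            cfc_mul _ _ A (continuousOn_spectrum_real _ A) (continuousOn_spectrum_real _ A),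
            cfc_id' ℝ A]
      _ = A := by simp_rw [mul_self_mul_inv]; exact cfc_id' ℝ A
  refine range_mulVecLin_le_iff.2 ⟨A * cfc (fun x : ℝ => x⁻¹) A, ?_⟩
  rw [add_mul, ← mul_assoc, ← mul_assoc, (hA.mul_eq_zero_comm hB).1 hAB, zero_mul, add_zero,
    hcube]

theorem range_mulVecLin_le_of_le_add (hC : C.IsHermitian) (hCA : C * A = 0) (hCB : C * B = 0)
    (h : LinearMap.range A.mulVecLin ≤ LinearMap.range (B + C).mulVecLin) :
    LinearMap.range A.mulVecLin ≤ LinearMap.range B.mulVecLin := by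
  obtain ⟨M, hM⟩ := range_mulVecLin_le_iff.1 h
  have hCM : C * M = 0 := by
    rw [← conjTranspose_mul_self_mul_eq_zero, hC.eq]
    calc C * C * M = C * A := by rw [hM, ← mul_assoc, mul_add, hCB, zero_add]
      _ = 0 := hCA
  exact range_mulVecLin_le_iff.2 ⟨M, by rw [hM, add_mul, hCM, add_zero]⟩

theorem cfc_mul_eq_zero_of_range_le (hB : B.IsHermitian) {f : ℝ → ℝ}
    (hf : ∀ x, x ≠ 0 → f x = 0)
    (h : LinearMap.range A.mulVecLin ≤ LinearMap.range B.mulVecLin) : cfc f B * A = 0 := by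
  have hfB : cfc f B * B = 0 := by
    calc cfc f B * B = cfc (fun x => f x * x) B := by
          rw [cfc_mul _ _ B (continuousOn_spectrum_real _ B) (continuousOn_spectrum_real _ B),
            cfc_id' ℝ B]
      _ = cfc (0 : ℝ → ℝ) B := cfc_congr fun x _ => by
          rcases eq_or_ne x 0 with rfl | hx
          · simp
          · simp [hf x hx]
      _ = 0 := cfc_zero ℝ B
  obtain ⟨M, hM⟩ := range_mulVecLin_le_iff.1 h
  rw [hM, ← mul_assoc, hfB, zero_mul]

noncomputable def eigenOverlap (hA : A.IsHermitian) (hB : B.IsHermitian) (i j : n) : ℝ :=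
  ‖(star (hA.eigenvectorUnitary : Matrix n n 𝕜) * hB.eigenvectorUnitary) i j‖ ^ 2

theorem eigenOverlap_nonneg (hA : A.IsHermitian) (hB : B.IsHermitian) (i j : n) :
    0 ≤ hA.eigenOverlap hB i j := by
  unfold eigenOverlap
  positivity

theorem trace_cfc_mul_cfc (hA : A.IsHermitian) (hB : B.IsHermitian) (f g : ℝ → ℝ) :
    (cfc f A * cfc g B).trace = ((∑ i, ∑ j, f (hA.eigenvalues i) * g (hB.eigenvalues j) *
      hA.eigenOverlap hB i j : ℝ) : 𝕜) := by
  set U : Matrix n n 𝕜 := (hA.eigenvectorUnitary : Matrix n n 𝕜)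
  set V : Matrix n n 𝕜 := (hB.eigenvectorUnitary : Matrix n n 𝕜)
  set W := star U * V
  have hU : U * star U = 1 := Unitary.mul_star_self_of_mem (SetLike.coe_mem _)
  rw [hA.cfc_eq, hB.cfc_eq, IsHermitian.cfc, IsHermitian.cfc, Unitary.conjStarAlgAut_apply,
    Unitary.conjStarAlgAut_apply, RCLike.ofReal_sum]
  have hconj : U * diagonal (RCLike.ofReal ∘ f ∘ hA.eigenvalues) * star U *
      (V * diagonal (RCLike.ofReal ∘ g ∘ hB.eigenvalues) * star V) =
      U * (diagonal (RCLike.ofReal ∘ f ∘ hA.eigenvalues) * W *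
        diagonal (RCLike.ofReal ∘ g ∘ hB.eigenvalues) * star W) * star U := by
    simp only [W, star_mul, star_star, mul_assoc, hU, mul_one]
  rw [hconj, trace_mul_cycle, Unitary.star_mul_self_of_mem (SetLike.coe_mem _), one_mul]
  refine Finset.sum_congr rfl fun i _ => ?_
  rw [diag_apply, mul_apply, RCLike.ofReal_sum]
  refine Finset.sum_congr rfl fun j _ => ?_
  rw [mul_diagonal, diagonal_mul, star_apply, RCLike.star_def]
  simp only [eigenOverlap, Function.comp_apply, RCLike.ofReal_mul, RCLike.ofReal_pow,
    ← RCLike.mul_conj]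
  ring

end IsHermitian

theorem PosSemidef.eigenOverlap_mul_eigenvalues_eq_zero (hA : A.PosSemidef) (hB : B.IsHermitian)
    (h : LinearMap.range A.mulVecLin ≤ LinearMap.range B.mulVecLin) {i j : n}
    (hj : hB.eigenvalues j = 0) : hA.1.eigenOverlap hB i j * hA.1.eigenvalues i = 0 := by
  have hsum := hA.1.trace_cfc_mul_cfc hB (fun x => x) (fun x => if x = 0 then 1 else 0)
  rw [cfc_id' ℝ A hA.1.isSelfAdjoint, trace_mul_comm,
    hB.cfc_mul_eq_zero_of_range_le (by simp) h, trace_zero, eq_comm, RCLike.ofReal_eq_zero] at hsum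
  have hnn : ∀ i j, 0 ≤ hA.1.eigenvalues i * (if hB.eigenvalues j = 0 then 1 else 0) *
      hA.1.eigenOverlap hB i j := fun i j => by
    have := hA.eigenvalues_nonneg i
    have := hA.1.eigenOverlap_nonneg hB i j
    positivity
  have hrow := (Finset.sum_eq_zero_iff_of_nonneg fun i _ =>
    Finset.sum_nonneg fun j _ => hnn i j).1 hsum i (Finset.mem_univ i)
  have hij := (Finset.sum_eq_zero_iff_of_nonneg fun j _ => hnn i j).1 hrow j (Finset.mem_univ j)
  simpa [hj, mul_comm] using hij

theorem range_mulVecLin_add_le_add_iff {ρ σ ω ϑ : Matrix n n 𝕜} (hρ : ρ.IsHermitian)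
    (hσ : σ.IsHermitian) (hω : ω.IsHermitian) (hϑ : ϑ.IsHermitian)
    (h1 : ρ * σ = 0) (h2 : ρ * ϑ = 0) (h3 : σ * ω = 0) (h4 : ω * ϑ = 0) :
    LinearMap.range (ρ + σ).mulVecLin ≤ LinearMap.range (ω + ϑ).mulVecLin ↔
      LinearMap.range ρ.mulVecLin ≤ LinearMap.range ω.mulVecLin ∧
        LinearMap.range σ.mulVecLin ≤ LinearMap.range ϑ.mulVecLin := by
  constructor
  · intro h
    refine ⟨hϑ.range_mulVecLin_le_of_le_add ((hρ.mul_eq_zero_comm hϑ).1 h2)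
        ((hω.mul_eq_zero_comm hϑ).1 h4) ((hρ.range_mulVecLin_le_add hσ h1).trans h),
      hω.range_mulVecLin_le_of_le_add ((hσ.mul_eq_zero_comm hω).1 h3) h4 ?_⟩
    rw [add_comm ϑ ω]
    refine (hσ.range_mulVecLin_le_add hρ ((hρ.mul_eq_zero_comm hσ).1 h1)).trans ?_
    rwa [add_comm σ ρ]
  · rintro ⟨hρω, hσϑ⟩
    rw [mulVecLin_add]
    refine (LinearMap.range_add_le _ _).trans (sup_le (hρω.trans ?_) (hσϑ.trans ?_))
    · exact hω.range_mulVecLin_le_add hϑ h4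
    · rw [add_comm ω ϑ]
      exact hϑ.range_mulVecLin_le_add hω ((hω.mul_eq_zero_comm hϑ).1 h4)

end Matrix

noncomputable def relEntReal {n : Type*} [Fintype n] [DecidableEq n] (ρ σ : Matrix n n ℂ) : ℝ :=
  (ρ * matLog ρ).trace.re - (ρ * matLog σ).trace.re + σ.trace.re - ρ.trace.re

section RelEnt

open Matrix

variable {n : Type*} [Fintype n] [DecidableEq n] {ρ σ ω ϑ : Matrix n n ℂ}

theorem relEnt_of_range_le (h : LinearMap.range ρ.mulVecLin ≤ LinearMap.range σ.mulVecLin) :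
    relEnt ρ σ = ENNReal.ofReal (relEntReal ρ σ) := by
  rw [relEnt, if_pos h, relEntReal]

theorem relEnt_of_not_range_le (h : ¬LinearMap.range ρ.mulVecLin ≤ LinearMap.range σ.mulVecLin) :
    relEnt ρ σ = ∞ := by
  rw [relEnt, if_neg h]

theorem matLog_eq_cfc (X : Matrix n n ℂ) : matLog X = cfc Real.log X := by
  unfold matLog
  split_ifs with hX
  · exact (hX.cfc_eq _).symm
  · exact (cfc_apply_of_not_predicate X hX).symm

theorem relEntReal_add (hρ : ρ.IsHermitian) (hσ : σ.IsHermitian) (hω : ω.IsHermitian)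
    (hϑ : ϑ.IsHermitian) (h1 : ρ * σ = 0) (h2 : ρ * ϑ = 0) (h3 : σ * ω = 0) (h4 : ω * ϑ = 0) :
    relEntReal (ρ + σ) (ω + ϑ) = relEntReal ρ ω + relEntReal σ ϑ := by
  have hlog : ∀ {A B : Matrix n n ℂ}, A.IsHermitian → B.IsHermitian → A * B = 0 →
      matLog (A + B) = matLog A + matLog B := fun hA hB hAB => by
    simp only [matLog_eq_cfc, hA.cfc_add_of_mul_eq_zero hB hAB Real.log_zero]
  have hcross : ∀ {A B : Matrix n n ℂ}, B.IsHermitian → A * B = 0 → A * matLog B = 0 :=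
    fun hB hAB => by rw [matLog_eq_cfc, hB.mul_cfc_eq_zero_of_mul_eq_zero hAB Real.log_zero]
  have hσρ : σ * ρ = 0 := (hρ.mul_eq_zero_comm hσ).1 h1
  simp only [relEntReal, hlog hρ hσ h1, hlog hω hϑ h4, add_mul, mul_add, hcross hσ h1,
    hcross hρ hσρ, hcross hϑ h2, hcross hω h3, add_zero, zero_add, trace_add, Complex.add_re]
  ring

theorem relEntReal_eq_sum (hρ : ρ.IsHermitian) (hω : ω.IsHermitian) :
    relEntReal ρ ω = ∑ i, ∑ j, hρ.eigenOverlap hω i j *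
      (hρ.eigenvalues i * Real.log (hρ.eigenvalues i) -
        hρ.eigenvalues i * Real.log (hω.eigenvalues j) - hρ.eigenvalues i + hω.eigenvalues j) := by
  have : IsSelfAdjoint ρ := hρ
  have : IsSelfAdjoint ω := hω
  have htrace : ∀ f g : ℝ → ℝ, (cfc f ρ * cfc g ω).trace.re = ∑ i, ∑ j,
      f (hρ.eigenvalues i) * g (hω.eigenvalues j) * hρ.eigenOverlap hω i j := fun f g => by
    rw [hρ.trace_cfc_mul_cfc hω]
    exact Complex.ofReal_re _
  have e1 := htrace (fun x => x * Real.log x) (fun _ => 1)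
  have e2 := htrace (fun x => x) Real.log
  have e3 := htrace (fun _ => 1) (fun x => x)
  have e4 := htrace (fun x => x) (fun _ => 1)
  rw [cfc_const_one ℝ ω, mul_one, cfc_mul _ _ ρ (continuousOn_spectrum_real _ ρ)
    (continuousOn_spectrum_real _ ρ), cfc_id' ℝ ρ, ← matLog_eq_cfc] at e1
  rw [cfc_id' ℝ ρ, ← matLog_eq_cfc] at e2
  rw [cfc_const_one ℝ ρ, one_mul, cfc_id' ℝ ω] at e3
  rw [cfc_const_one ℝ ω, mul_one, cfc_id' ℝ ρ] at e4
  simp only [relEntReal, e1, e2, e3, e4, ← Finset.sum_sub_distrib, ← Finset.sum_add_distrib]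
  exact Finset.sum_congr rfl fun i _ => Finset.sum_congr rfl fun j _ => by ring

theorem relEntReal_nonneg (hρ : ρ.PosSemidef) (hω : ω.PosSemidef)
    (h : LinearMap.range ρ.mulVecLin ≤ LinearMap.range ω.mulVecLin) : 0 ≤ relEntReal ρ ω := by
  rw [relEntReal_eq_sum hρ.1 hω.1]
  refine Finset.sum_nonneg fun i _ => Finset.sum_nonneg fun j _ => ?_
  rcases (hω.eigenvalues_nonneg j).eq_or_lt with hq | hq
  · have hweight := hρ.eigenOverlap_mul_eigenvalues_eq_zero hω.1 h hq.symm (i := i)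
    rw [← hq, Real.log_zero]
    exact le_of_eq (by linear_combination (1 - Real.log (hρ.1.eigenvalues i)) * hweight)
  · exact mul_nonneg (hρ.1.eigenOverlap_nonneg hω.1 i j) (by
      linarith [Real.sub_le_mul_log_sub_mul_log (hρ.eigenvalues_nonneg i) hq])

end RelEnt

/-- Additivity on orthogonal pairs: if `ρσ = ρϑ = σω = ωϑ = 0` then
`D(ρ+σ‖ω+ϑ) = D(ρ‖ω) + D(σ‖ϑ)` in `[0,+∞]`. -/
theorem relEnt_add_eq {n : Type*} [Fintype n] [DecidableEq n]
    (ρ σ ω ϑ : Matrix n n ℂ)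
    (hρ : ρ.PosSemidef) (hσ : σ.PosSemidef) (hω : ω.PosSemidef) (hϑ : ϑ.PosSemidef)
    (h1 : ρ * σ = 0) (h2 : ρ * ϑ = 0) (h3 : σ * ω = 0) (h4 : ω * ϑ = 0) :
    relEnt (ρ + σ) (ω + ϑ) = relEnt ρ ω + relEnt σ ϑ := by
  have hsplit := Matrix.range_mulVecLin_add_le_add_iff hρ.1 hσ.1 hω.1 hϑ.1 h1 h2 h3 h4
  by_cases hρω : LinearMap.range ρ.mulVecLin ≤ LinearMap.range ω.mulVecLin
  · by_cases hσϑ : LinearMap.range σ.mulVecLin ≤ LinearMap.range ϑ.mulVecLin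
    · rw [relEnt_of_range_le (hsplit.2 ⟨hρω, hσϑ⟩), relEnt_of_range_le hρω,
        relEnt_of_range_le hσϑ, relEntReal_add hρ.1 hσ.1 hω.1 hϑ.1 h1 h2 h3 h4,
        ENNReal.ofReal_add (relEntReal_nonneg hρ hω hρω) (relEntReal_nonneg hσ hϑ hσϑ)]
    · rw [relEnt_of_not_range_le fun h => hσϑ (hsplit.1 h).2, relEnt_of_not_range_le hσϑ,
        add_top]
  · rw [relEnt_of_not_range_le fun h => hρω (hsplit.1 h).1, relEnt_of_not_range_le hρω,
      top_add]
end

section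
/- Let σ be a positive semidefinite complex matrix of finite size and P an orthogonal projection (P² = P = P†) with Pσ = σP. Then P·Log(PσP + (I−P)) = P·Log σ, where Log denotes the functional calculus of the real logarithm extended by log 0 = 0 applied to a positive semidefinite matrix. -/
open scoped ENNReal ComplexOrder Matrix

/-- Truncated logarithm identity: if `P` is an orthogonal projection commuting with a
positive semidefinite `σ`, then `P·Log(PσP + (I−P)) = P·Log σ`. -/
theorem proj_matLog_truncation {n : Type*} [Fintype n] [DecidableEq n]
    (σ P : Matrix n n ℂ) (hσ : σ.PosSemidef)
    (hP2 : P * P = P) (hPadj : Pᴴ = P) (hPσ : P * σ = σ * P) :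
    P * matLog (P * σ * P + (1 - P)) = P * matLog σ := by
  classical
  set A : Matrix n n ℂ := P * σ * P + (1 - P) with hA_def
  have hσH : σ.IsHermitian := hσ.1
  have hAH : A.IsHermitian := by
    have h1 : (P * σ * P).IsHermitian := by
      unfold Matrix.IsHermitian
      rw [Matrix.conjTranspose_mul, Matrix.conjTranspose_mul, hPadj, hσH.eq, Matrix.mul_assoc]
    have h2 : ((1 : Matrix n n ℂ) - P).IsHermitian := by
      unfold Matrix.IsHermitian
      rw [Matrix.conjTranspose_sub, hPadj, Matrix.conjTranspose_one]
    exact h1.add h2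
  -- key identity : P * A = P * σ
  have hPA : P * A = P * σ := by
    have : P * (P * σ * P) = P * σ := by
      rw [← Matrix.mul_assoc, ← Matrix.mul_assoc, hP2, Matrix.mul_assoc, ← hPσ,
        ← Matrix.mul_assoc, hP2]
    rw [hA_def, Matrix.mul_add, this, Matrix.mul_sub, Matrix.mul_one, hP2, sub_self, add_zero]
  have hpow : ∀ k : ℕ, P * A ^ k = P * σ ^ k := by
    intro k
    induction k with
    | zero => simp
    | succ k ih =>
      rw [pow_succ', pow_succ', ← Matrix.mul_assoc, hPA, hPσ, Matrix.mul_assoc, ih,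
        ← Matrix.mul_assoc, ← hPσ, Matrix.mul_assoc]
  have hpoly : ∀ q : Polynomial ℝ, P * (Polynomial.aeval A q) = P * (Polynomial.aeval σ q) := by
    intro q
    induction q using Polynomial.induction_on' with
    | add p q hp hq => simp only [map_add, Matrix.mul_add, hp, hq]
    | monomial k c =>
      simp only [Polynomial.aeval_monomial, Algebra.algebraMap_eq_smul_one, smul_mul_assoc,
        one_mul, mul_smul_comm, hpow k]
  -- build an interpolating polynomial for Real.log on both spectra
  have hfin : (spectrum ℝ A ∪ spectrum ℝ σ).Finite :=
    (Matrix.finite_real_spectrum (A := A)).union (Matrix.finite_real_spectrum (A := σ))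
  set S : Finset ℝ := hfin.toFinset with hS
  set q : Polynomial ℝ := Lagrange.interpolate S id Real.log with hq_def
  have hq : ∀ x ∈ S, q.eval x = Real.log x := by
    intro x hx
    exact Lagrange.eval_interpolate_at_node (v := id) (r := Real.log) (s := S) (i := x) (Set.injOn_id _) hx
  have hAsa : IsSelfAdjoint A := hAH
  have hσsa : IsSelfAdjoint σ := hσH
  have hcongrA : cfc Real.log A = cfc q.eval A := by
    refine cfc_congr fun x hx => ?_
    exact (hq x (hfin.mem_toFinset.mpr (Or.inl hx))).symm
  have hcongrσ : cfc Real.log σ = cfc q.eval σ := by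
    refine cfc_congr fun x hx => ?_
    exact (hq x (hfin.mem_toFinset.mpr (Or.inr hx))).symm
  rw [matLog, matLog, dif_pos hAH, dif_pos hσH, ← Matrix.IsHermitian.cfc_eq,
    ← Matrix.IsHermitian.cfc_eq, hcongrA, hcongrσ, cfc_polynomial q A hAsa,
    cfc_polynomial q σ hσsa]
  exact hpoly q
end
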